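/- arXiv:1805.01256 — 2 statements merged into one kernel-verified Lean document; each statement's English description precedes it below -/
import Mathlib

section
/- Let ω be a radial weight with ω̂(r) = ∫_r^1 ω(s) ds > 0 for all 0 ≤ r < 1. Then ω satisfies: there exist K > 1 and C > 1 such that ω̂(r) ≥ C·ω̂(1 - (1-r)/K) for all 0 ≤ r < 1, if and only if there exist C' > 0 and γ > 0 such that ω̂(t) ≤ C'·((1-t)/(1-r))^γ · ω̂(r) for all 0 ≤ r ≤ t < 1. -/
open MeasureTheory Set

/-- `what ω r = ∫_r^1 ω(s) ds`. -/
noncomputable def what (ω : ℝ → ℝ) (r : ℝ) : ℝ := ∫ s in r..(1:ℝ), ω s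

lemma wII (ω : ℝ → ℝ) (hint : IntegrableOn ω (Set.Ico (0:ℝ) 1))
    {a b : ℝ} (ha : 0 ≤ a) (hab : a ≤ b) (hb : b ≤ 1) :
    IntervalIntegrable ω volume a b := by
  rw [intervalIntegrable_iff_integrableOn_Ioc_of_le hab,
    integrableOn_Ioc_iff_integrableOn_Ioo]
  exact hint.mono_set (fun x hx => ⟨le_trans ha (le_of_lt hx.1), lt_of_lt_of_le hx.2 hb⟩)

lemma wmono (ω : ℝ → ℝ) (hint : IntegrableOn ω (Set.Ico (0:ℝ) 1))
    (hnn : ∀ r ∈ Set.Ico (0:ℝ) 1, 0 ≤ ω r)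
    {a b : ℝ} (ha : 0 ≤ a) (hab : a ≤ b) (hb : b ≤ 1) :
    what ω b ≤ what ω a := by
  have h1 : IntervalIntegrable ω volume a b := wII ω hint ha hab hb
  have h2 : IntervalIntegrable ω volume b 1 := wII ω hint (ha.trans hab) hb le_rfl
  have hsplit : what ω a = (∫ s in a..b, ω s) + what ω b :=
    (intervalIntegral.integral_add_adjacent_intervals h1 h2).symm
  have hnn' : 0 ≤ ∫ s in a..b, ω s := by
    apply intervalIntegral.integral_nonneg_of_ae_restrict hab
    have hne : ∀ᵐ x : ℝ ∂(volume.restrict (Icc a b)), x ≠ 1 := by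
      refine ae_restrict_of_ae ?_
      have : (volume ({1} : Set ℝ)) = 0 := Real.volume_singleton
      exact measure_eq_zero_iff_ae_notMem.mp this
    filter_upwards [hne, ae_restrict_mem measurableSet_Icc] with x hx1 hx
    exact hnn x ⟨ha.trans hx.1, lt_of_le_of_ne (hx.2.trans hb) hx1⟩
  linarith

theorem stmt_3 (ω : ℝ → ℝ)
    (hint : IntegrableOn ω (Set.Ico (0:ℝ) 1))
    (hnn : ∀ r ∈ Set.Ico (0:ℝ) 1, 0 ≤ ω r)
    (hpos : ∀ r ∈ Set.Ico (0:ℝ) 1, 0 < what ω r) :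
    (∃ K C : ℝ, 1 < K ∧ 1 < C ∧ ∀ r ∈ Set.Ico (0:ℝ) 1,
      what ω r ≥ C * what ω (1 - (1 - r) / K)) ↔
    (∃ C' γ : ℝ, 0 < C' ∧ 0 < γ ∧ ∀ r t : ℝ, 0 ≤ r → r ≤ t → t < 1 →
      what ω t ≤ C' * ((1 - t) / (1 - r)) ^ γ * what ω r) := by
  constructor
  · rintro ⟨K, C, hK, hC, h⟩
    have hK0 : (0:ℝ) < K := by linarith
    have hC0 : (0:ℝ) < C := by linarith
    set γ : ℝ := Real.logb K C with hγdef
    have hγ : 0 < γ := Real.logb_pos hK hC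
    have hKγ : K ^ γ = C := Real.rpow_logb hK0 (ne_of_gt hK) hC0
    -- iterate
    have key : ∀ n : ℕ, ∀ r ∈ Set.Ico (0:ℝ) 1,
        C ^ n * what ω (1 - (1 - r) / K ^ n) ≤ what ω r := by
      intro n
      induction n with
      | zero => intro r hr; simp
      | succ n ih =>
        intro r hr
        set r' : ℝ := 1 - (1 - r) / K ^ n with hr'def
        have h1r : 0 < 1 - r := by linarith [hr.2]
        have hKn : (0:ℝ) < K ^ n := pow_pos hK0 n
        have hKn1 : (1:ℝ) ≤ K ^ n := one_le_pow₀ (le_of_lt hK)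
        have hr' : r' ∈ Set.Ico (0:ℝ) 1 := by
          constructor
          · have : (1 - r) / K ^ n ≤ 1 - r := by
              rw [div_le_iff₀ hKn]; nlinarith
            have : (1 - r) / K ^ n ≤ 1 := by linarith [hr.1]
            simp only [hr'def]; linarith
          · simp only [hr'def]
            have : 0 < (1 - r) / K ^ n := div_pos h1r hKn
            linarith
        have hstep := h r' hr'
        have heq : 1 - (1 - r') / K = 1 - (1 - r) / K ^ (n + 1) := by
          simp only [hr'def]
          field_simp
          ring
        have := ih r hr
        calc C ^ (n + 1) * what ω (1 - (1 - r) / K ^ (n + 1))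
            = C ^ n * (C * what ω (1 - (1 - r') / K)) := by rw [heq]; ring
          _ ≤ C ^ n * what ω r' := by
              apply mul_le_mul_of_nonneg_left hstep (le_of_lt (pow_pos hC0 n))
          _ ≤ what ω r := this
    refine ⟨C, γ, hC0, hγ, ?_⟩
    intro r t hr0 hrt ht1
    have h1t : (0:ℝ) < 1 - t := by linarith
    have h1r : (0:ℝ) < 1 - r := by linarith
    set y : ℝ := (1 - r) / (1 - t) with hy
    have hy1 : 1 ≤ y := (one_le_div h1t).mpr (by linarith)
    have hy0 : 0 < y := lt_of_lt_of_le one_pos hy1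
    set n : ℕ := ⌊Real.logb K y⌋₊ with hn
    have hlogy : 0 ≤ Real.logb K y := Real.logb_nonneg hK hy1
    have hfl : (n : ℝ) ≤ Real.logb K y := Nat.floor_le hlogy
    have hfu : Real.logb K y < (n : ℝ) + 1 := Nat.lt_floor_add_one _
    have hKny : (K : ℝ) ^ n ≤ y := by
      have := Real.rpow_le_rpow_left_iff (x := K) (y := (n:ℝ)) (z := Real.logb K y) hK
      have h2 : (K:ℝ) ^ (n:ℝ) ≤ K ^ Real.logb K y := this.mpr hfl
      rwa [Real.rpow_natCast, Real.rpow_logb hK0 (ne_of_gt hK) hy0] at h2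
    have hyKn1 : y < (K : ℝ) ^ (n + 1) := by
      have := Real.rpow_lt_rpow_left_iff (x := K) (y := Real.logb K y) (z := ((n:ℝ)+1)) hK
      have h2 : (K:ℝ) ^ Real.logb K y < K ^ ((n:ℝ)+1) := this.mpr hfu
      rw [Real.rpow_logb hK0 (ne_of_gt hK) hy0] at h2
      have : ((n:ℝ)+1) = ((n+1 : ℕ) : ℝ) := by push_cast; ring
      rwa [this, Real.rpow_natCast] at h2
    have hrI : r ∈ Set.Ico (0:ℝ) 1 := ⟨hr0, by linarith⟩
    have hrn : 1 - (1 - r) / K ^ n ≤ t := by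
      have hKn : (0:ℝ) < K ^ n := pow_pos hK0 n
      have : 1 - t ≤ (1 - r) / K ^ n := by
        rw [le_div_iff₀ hKn]
        calc (1 - t) * K ^ n ≤ (1 - t) * y := by
              apply mul_le_mul_of_nonneg_left hKny (le_of_lt h1t)
          _ = 1 - r := by rw [hy]; field_simp
      linarith
    have hrnI : (1 - (1 - r) / K ^ n) ∈ Set.Ico (0:ℝ) 1 := by
      have hKn : (0:ℝ) < K ^ n := pow_pos hK0 n
      have hKn1 : (1:ℝ) ≤ K ^ n := one_le_pow₀ (le_of_lt hK)
      constructor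
      · have : (1 - r) / K ^ n ≤ 1 - r := by
          rw [div_le_iff₀ hKn]; nlinarith
        linarith
      · have : 0 < (1 - r) / K ^ n := div_pos h1r hKn
        linarith
    have hmono : what ω t ≤ what ω (1 - (1 - r) / K ^ n) :=
      wmono ω hint hnn hrnI.1 hrn (le_of_lt ht1)
    have hkey := key n r hrI
    -- C^n * what t ≤ what r
    have h1 : C ^ n * what ω t ≤ what ω r := by
      calc C ^ n * what ω t ≤ C ^ n * what ω (1 - (1 - r) / K ^ n) := by
            apply mul_le_mul_of_nonneg_left hmono (le_of_lt (pow_pos hC0 n))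
        _ ≤ what ω r := hkey
    -- 1 ≤ C^(n+1) * ((1-t)/(1-r))^γ
    have hx : (1 - t) / (1 - r) = 1 / y := by
      rw [hy, one_div_div]
    have h2 : (1:ℝ) ≤ C ^ (n + 1) * ((1 - t) / (1 - r)) ^ γ := by
      rw [hx]
      have hCn : (C:ℝ) ^ (n+1) = (K ^ (n+1) : ℝ) ^ γ := by
        rw [← hKγ, ← Real.rpow_natCast (K ^ γ) (n+1), ← Real.rpow_natCast K (n+1),
          ← Real.rpow_mul (le_of_lt hK0), ← Real.rpow_mul (le_of_lt hK0), mul_comm]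
      rw [hCn, ← Real.mul_rpow (by positivity) (by positivity)]
      have hbase : (1:ℝ) ≤ K ^ (n+1) * (1 / y) := by
        rw [mul_one_div, le_div_iff₀ hy0, one_mul]
        exact le_of_lt hyKn1
      calc (1:ℝ) = 1 ^ γ := (Real.one_rpow γ).symm
        _ ≤ (K ^ (n+1) * (1 / y)) ^ γ :=
            Real.rpow_le_rpow zero_le_one hbase (le_of_lt hγ)
    -- combine
    have hwr : 0 < what ω r := hpos r hrI
    have hwt0 : 0 ≤ what ω t := by
      have := hpos t ⟨le_trans hr0 hrt, ht1⟩; linarith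
    calc what ω t = 1 * what ω t := (one_mul _).symm
      _ ≤ (C ^ (n + 1) * ((1 - t) / (1 - r)) ^ γ) * what ω t := by
          apply mul_le_mul_of_nonneg_right h2 hwt0
      _ = (C * ((1 - t) / (1 - r)) ^ γ) * (C ^ n * what ω t) := by ring
      _ ≤ (C * ((1 - t) / (1 - r)) ^ γ) * what ω r := by
          apply mul_le_mul_of_nonneg_left h1 (by positivity)
      _ = C * ((1 - t) / (1 - r)) ^ γ * what ω r := by ring
  · rintro ⟨C', γ, hC', hγ, h⟩
    set K : ℝ := max 2 ((2 * C' + 1) ^ (1/γ)) with hKdef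
    have hK2 : (2:ℝ) ≤ K := le_max_left _ _
    have hK1 : (1:ℝ) < K := by linarith
    have hK0 : (0:ℝ) < K := by linarith
    have hKγ : 2 * C' + 1 ≤ K ^ γ := by
      have h1 : (2 * C' + 1) ^ (1/γ) ≤ K := le_max_right _ _
      have h2 : ((2 * C' + 1) ^ (1/γ)) ^ γ ≤ K ^ γ :=
        Real.rpow_le_rpow (by positivity) h1 (le_of_lt hγ)
      rwa [← Real.rpow_mul (by positivity), one_div, inv_mul_cancel₀ (ne_of_gt hγ),
        Real.rpow_one] at h2
    refine ⟨K, 2, hK1, one_lt_two, ?_⟩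
    intro r hr
    have h1r : (0:ℝ) < 1 - r := by linarith [hr.2]
    set t : ℝ := 1 - (1 - r) / K with htdef
    have hrt : r ≤ t := by
      have : (1 - r) / K ≤ 1 - r := by
        rw [div_le_iff₀ hK0]; nlinarith
      simp only [htdef]; linarith
    have ht1 : t < 1 := by
      have : 0 < (1 - r) / K := div_pos h1r hK0
      simp only [htdef]; linarith
    have happ := h r t hr.1 hrt ht1
    have hxeq : (1 - t) / (1 - r) = 1 / K := by
      simp only [htdef]
      field_simp
      ring
    rw [hxeq] at happ
    have hKγ0 : (0:ℝ) < K ^ γ := Real.rpow_pos_of_pos hK0 γ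
    have hpow : (1 / K : ℝ) ^ γ = 1 / K ^ γ := by
      rw [one_div, one_div, Real.inv_rpow (le_of_lt hK0)]
    have hwr : 0 < what ω r := hpos r hr
    have hbound : C' * (1 / K) ^ γ ≤ 1 / 2 := by
      rw [hpow, mul_one_div, div_le_div_iff₀ hKγ0 two_pos]
      linarith
    have hge : C' * (1 / K) ^ γ * what ω r ≤ (1/2) * what ω r := by
      apply mul_le_mul_of_nonneg_right hbound (le_of_lt hwr)
    show what ω r ≥ 2 * what ω t
    nlinarith [happ]
end

section
/- Let ω be a radial weight belonging to both D̂ and Ď (i.e., ω ∈ D), with ω̂(r) = ∫_r^1 ω(s) ds. Let 1 < p < ∞ and let η ∈ Ď be a radial weight (there exist K > 1, C > 1 with η̂(r) ≥ C·η̂(1-(1-r)/K)). Then there exists a constant c > 0 such that ∫_0^r η(s)/ω̂(s)^p ds ≥ c·η̂(r)/ω̂(r)^p for all r with 1 - 1/K ≤ r < 1. -/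
/-!
Put `r' = 1 - K (1 - r)`, so that `r = 1 - (1 - r') / K` and the `Ď`-condition for `η` gives
`η̂(r') - η̂(r) ≥ (C - 1) η̂(r)`. Since `ω̂` decreases, the integrand is at least `η / ω̂(r')^p`
on `[r', r]`, so the integral over `[0, r]` dominates `(η̂(r') - η̂(r)) / ω̂(r')^p`. Iterating
the `D̂`-condition `n` times with `2^n > K` gives `ω̂(r') ≤ C₁^n ω̂(r)`, hence the bound with
`c = (C - 1) / C₁^(n p)`.
-/

open MeasureTheory Set

lemma intervalIntegrable_of_integrableOn_Ico {f : ℝ → ℝ} {u v a b : ℝ}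
    (hf : IntegrableOn f (Ico u v)) (ha : u ≤ a) (hab : a ≤ b) (hb : b ≤ v) :
    IntervalIntegrable f volume a b := by
  rw [intervalIntegrable_iff_integrableOn_Ioc_of_le hab, integrableOn_Ioc_iff_integrableOn_Ioo]
  exact hf.mono_set fun x hx => ⟨ha.trans hx.1.le, hx.2.trans_le hb⟩

section Tail

variable {f : ℝ → ℝ} (hf : IntegrableOn f (Ico 0 1))
include hf

lemma what_sub_what {a b : ℝ} (ha : 0 ≤ a) (hab : a ≤ b) (hb : b ≤ 1) :
    what f a - what f b = ∫ s in a..b, f s := by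
  rw [what, what, ← intervalIntegral.integral_add_adjacent_intervals
    (intervalIntegrable_of_integrableOn_Ico hf ha hab hb)
    (intervalIntegrable_of_integrableOn_Ico hf (ha.trans hab) hb le_rfl)]
  ring

lemma what_le_what (hnn : ∀ s ∈ Ico (0:ℝ) 1, 0 ≤ f s) {a b : ℝ} (ha : 0 ≤ a)
    (hab : a ≤ b) (hb : b < 1) : what f b ≤ what f a := by
  have : 0 ≤ ∫ s in a..b, f s :=
    intervalIntegral.integral_nonneg hab fun x hx => hnn x ⟨ha.trans hx.1, hx.2.trans_lt hb⟩
  linarith [what_sub_what hf ha hab hb.le]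

lemma continuousOn_what : ContinuousOn (what f) (Icc 0 1) := by
  have hf' : IntegrableOn f (uIcc 0 1) := by
    rwa [uIcc_of_le zero_le_one, integrableOn_Icc_iff_integrableOn_Ico]
  have := intervalIntegral.continuousOn_primitive_interval_left hf'
  rwa [uIcc_of_le zero_le_one] at this

end Tail

lemma what_le_pow_mul_what_iterate {ω : ℝ → ℝ} {C : ℝ} (hC : 0 ≤ C)
    (hD : ∀ r ∈ Ico (0:ℝ) 1, what ω r ≤ C * what ω ((1 + r) / 2)) (n : ℕ) {a : ℝ}
    (ha : a ∈ Ico (0:ℝ) 1) : what ω a ≤ C ^ n * what ω (1 - (1 - a) / 2 ^ n) := by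
  induction n with
  | zero => simp
  | succ n ih =>
    set b := 1 - (1 - a) / 2 ^ n
    have hshrink : 0 < (1 - a) / 2 ^ n ∧ (1 - a) / 2 ^ n ≤ 1 - a :=
      ⟨div_pos (by linarith [ha.2]) (by positivity),
        div_le_self (by linarith [ha.2]) (one_le_pow₀ (by norm_num))⟩
    have hb : b ∈ Ico (0:ℝ) 1 := ⟨by linarith [ha.1], by linarith⟩
    have hmid : (1 + b) / 2 = 1 - (1 - a) / 2 ^ (n + 1) := by
      simp only [b, pow_succ]; field_simp; ring
    calc what ω a ≤ C ^ n * what ω b := ih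
      _ ≤ C ^ n * (C * what ω (1 - (1 - a) / 2 ^ (n + 1))) := by
          rw [← hmid]; exact mul_le_mul_of_nonneg_left (hD b hb) (by positivity)
      _ = C ^ (n + 1) * what ω (1 - (1 - a) / 2 ^ (n + 1)) := by ring

lemma what_le_pow_mul_what {ω : ℝ → ℝ} (hω : IntegrableOn ω (Ico 0 1))
    (hnn : ∀ s ∈ Ico (0:ℝ) 1, 0 ≤ ω s) {C : ℝ} (hC : 0 ≤ C)
    (hD : ∀ r ∈ Ico (0:ℝ) 1, what ω r ≤ C * what ω ((1 + r) / 2)) {n : ℕ} {a b : ℝ}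
    (ha : 0 ≤ a) (hab : a ≤ b) (hb : b < 1) (hn : 1 - a ≤ 2 ^ n * (1 - b)) :
    what ω a ≤ C ^ n * what ω b := by
  have h2n : (0:ℝ) < 2 ^ n := by positivity
  have hq : b ≤ 1 - (1 - a) / 2 ^ n := by
    have : (1 - a) / 2 ^ n ≤ 1 - b := by rw [div_le_iff₀ h2n]; linarith
    linarith
  have hq1 : 1 - (1 - a) / 2 ^ n < 1 := by
    have : 0 < (1 - a) / 2 ^ n := div_pos (by linarith) h2n
    linarith
  calc what ω a ≤ C ^ n * what ω (1 - (1 - a) / 2 ^ n) :=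
        what_le_pow_mul_what_iterate hC hD n ⟨ha, hab.trans_lt hb⟩
    _ ≤ C ^ n * what ω b :=
        mul_le_mul_of_nonneg_left (what_le_what hω hnn (ha.trans hab) hq hq1) (by positivity)

section Integrand

variable {η ω : ℝ → ℝ} {p : ℝ} (hηint : IntegrableOn η (Ico 0 1))
  (hωint : IntegrableOn ω (Ico 0 1)) (hωpos : ∀ r ∈ Ico (0:ℝ) 1, 0 < what ω r)
include hηint hωint hωpos

lemma intervalIntegrable_div_what_rpow {b : ℝ} (hb0 : 0 ≤ b) (hb : b < 1) :
    IntervalIntegrable (fun s => η s / what ω s ^ p) volume 0 b := by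
  have hsub : Icc 0 b ⊆ Ico (0:ℝ) 1 := fun x hx => ⟨hx.1, hx.2.trans_lt hb⟩
  have hcont : ContinuousOn (fun s => (what ω s ^ p)⁻¹) (Icc 0 b) :=
    (((continuousOn_what hωint).mono fun x hx => ⟨hx.1, hx.2.trans hb.le⟩).rpow_const
      fun x hx => Or.inl (hωpos x (hsub hx)).ne').inv₀
      fun x hx => (Real.rpow_pos_of_pos (hωpos x (hsub hx)) p).ne'
  rw [intervalIntegrable_iff_integrableOn_Icc_of_le hb0]
  simpa only [div_eq_mul_inv] using (hηint.mono_set hsub).mul_continuousOn hcont isCompact_Icc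

lemma what_sub_what_div_rpow_le_integral (hp : 0 ≤ p)
    (hηnn : ∀ s ∈ Ico (0:ℝ) 1, 0 ≤ η s) (hωnn : ∀ s ∈ Ico (0:ℝ) 1, 0 ≤ ω s) {a b : ℝ}
    (ha : 0 ≤ a) (hab : a ≤ b) (hb : b < 1) :
    (what η a - what η b) / what ω a ^ p ≤ ∫ s in (0:ℝ)..b, η s / what ω s ^ p := by
  have hint := intervalIntegrable_div_what_rpow (p := p) hηint hωint hωpos (ha.trans hab) hb
  have hint_ab : IntervalIntegrable (fun s => η s / what ω s ^ p) volume a b :=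
    hint.mono_set <| by
      rw [uIcc_of_le hab, uIcc_of_le (ha.trans hab)]; exact Icc_subset_Icc ha le_rfl
  have hint_0a : IntervalIntegrable (fun s => η s / what ω s ^ p) volume 0 a :=
    hint.mono_set <| by
      rw [uIcc_of_le ha, uIcc_of_le (ha.trans hab)]; exact Icc_subset_Icc le_rfl hab
  have hmem : ∀ x ∈ Icc a b, x ∈ Ico (0:ℝ) 1 := fun x hx =>
    ⟨ha.trans hx.1, hx.2.trans_lt hb⟩
  have hhead : 0 ≤ ∫ s in (0:ℝ)..a, η s / what ω s ^ p :=
    intervalIntegral.integral_nonneg ha fun x hx =>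
      have hx' : x ∈ Ico (0:ℝ) 1 := ⟨hx.1, (hx.2.trans hab).trans_lt hb⟩
      div_nonneg (hηnn x hx') (Real.rpow_pos_of_pos (hωpos x hx') p).le
  have htail : ∫ s in a..b, η s / what ω a ^ p ≤ ∫ s in a..b, η s / what ω s ^ p := by
    refine intervalIntegral.integral_mono_on hab
      ((intervalIntegrable_of_integrableOn_Ico hηint ha hab hb.le).div_const _) hint_ab
      fun x hx => div_le_div_of_nonneg_left (hηnn x (hmem x hx))
        (Real.rpow_pos_of_pos (hωpos x (hmem x hx)) p) ?_
    exact Real.rpow_le_rpow (hωpos x (hmem x hx)).le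
      (what_le_what hωint hωnn ha hx.1 (hmem x hx).2) hp
  calc (what η a - what η b) / what ω a ^ p = ∫ s in a..b, η s / what ω a ^ p := by
        rw [intervalIntegral.integral_div, what_sub_what hηint ha hab hb.le]
    _ ≤ ∫ s in a..b, η s / what ω s ^ p := htail
    _ ≤ ∫ s in (0:ℝ)..b, η s / what ω s ^ p := by
        rw [← intervalIntegral.integral_add_adjacent_intervals hint_0a hint_ab]; linarith

end Integrand

theorem stmt_10_general (p : ℝ) (hp : 1 < p)
    (ω η : ℝ → ℝ)
    (hωint : IntegrableOn ω (Set.Ico (0:ℝ) 1))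
    (hηint : IntegrableOn η (Set.Ico (0:ℝ) 1))
    (hωnn : ∀ s ∈ Set.Ico (0:ℝ) 1, 0 ≤ ω s) (hηnn : ∀ s ∈ Set.Ico (0:ℝ) 1, 0 ≤ η s)
    (hωpos : ∀ r ∈ Set.Ico (0:ℝ) 1, 0 < what ω r)
    (hηpos : ∀ r ∈ Set.Ico (0:ℝ) 1, 0 < what η r)
    (C₁ : ℝ) (hC₁ : 1 < C₁)
    (hωDD : ∀ r ∈ Set.Ico (0:ℝ) 1, what ω r ≤ C₁ * what ω ((1 + r) / 2))
    (K C : ℝ) (hK : 1 < K) (hC : 1 < C)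
    (hηDd : ∀ r ∈ Set.Ico (0:ℝ) 1, what η r ≥ C * what η (1 - (1 - r) / K)) :
    ∃ c : ℝ, 0 < c ∧ ∀ r : ℝ, 1 - 1 / K ≤ r → r < 1 →
      (∫ s in (0:ℝ)..r, η s / (what ω s) ^ p) ≥ c * what η r / (what ω r) ^ p := by
  obtain ⟨n, hn⟩ := pow_unbounded_of_one_lt K (by norm_num : (1:ℝ) < 2)
  have hM : 0 < C₁ ^ n := by positivity
  refine ⟨(C - 1) / (C₁ ^ n) ^ p, div_pos (by linarith) (Real.rpow_pos_of_pos hM p), ?_⟩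
  intro r hr hr1
  have hK0 : 0 < K := by linarith
  have h1r : K * (1 - r) ≤ 1 := by
    have := mul_le_mul_of_nonneg_left (show 1 - r ≤ 1 / K by linarith) hK0.le
    rwa [mul_one_div_cancel hK0.ne'] at this
  set r' := 1 - K * (1 - r)
  have hr' : r' ∈ Ico (0:ℝ) 1 := ⟨by linarith, by nlinarith⟩
  have hr'r : r' ≤ r := by nlinarith
  have hη : C * what η r ≤ what η r' := by
    simpa [r', hK0.ne'] using hηDd r' hr'
  have hω : what ω r' ≤ C₁ ^ n * what ω r :=
    what_le_pow_mul_what hωint hωnn (by linarith) hωDD hr'.1 hr'r hr1 (by nlinarith)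
  have hωr := hωpos r ⟨hr'.1.trans hr'r, hr1⟩
  calc (C - 1) / (C₁ ^ n) ^ p * what η r / what ω r ^ p
      = (C - 1) * what η r / (C₁ ^ n * what ω r) ^ p := by
        rw [Real.mul_rpow hM.le hωr.le]; field_simp
    _ ≤ (what η r' - what η r) / what ω r' ^ p :=
        div_le_div₀ (by nlinarith [hηpos r ⟨hr'.1.trans hr'r, hr1⟩]) (by linarith)
          (Real.rpow_pos_of_pos (hωpos _ hr') p)
          (Real.rpow_le_rpow (hωpos _ hr').le hω (by linarith))
    _ ≤ ∫ s in (0:ℝ)..r, η s / what ω s ^ p :=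
        what_sub_what_div_rpow_le_integral hηint hωint hωpos (by linarith) hηnn hωnn
          hr'.1 hr'r hr1

theorem stmt_10 (p : ℝ) (hp : 1 < p)
    (ω η : ℝ → ℝ)
    (hωint : IntegrableOn ω (Set.Ico (0:ℝ) 1))
    (hηint : IntegrableOn η (Set.Ico (0:ℝ) 1))
    (hωnn : ∀ s ∈ Set.Ico (0:ℝ) 1, 0 ≤ ω s) (hηnn : ∀ s ∈ Set.Ico (0:ℝ) 1, 0 ≤ η s)
    (hωpos : ∀ r ∈ Set.Ico (0:ℝ) 1, 0 < what ω r)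
    (hηpos : ∀ r ∈ Set.Ico (0:ℝ) 1, 0 < what η r)
    (C₁ : ℝ) (hC₁ : 1 < C₁)
    (hωDD : ∀ r ∈ Set.Ico (0:ℝ) 1, what ω r ≤ C₁ * what ω ((1 + r) / 2))
    (K₁ C₂ : ℝ) (hK₁ : 1 < K₁) (hC₂ : 1 < C₂)
    (hωDd : ∀ r ∈ Set.Ico (0:ℝ) 1, what ω r ≥ C₂ * what ω (1 - (1 - r) / K₁))
    (K C : ℝ) (hK : 1 < K) (hC : 1 < C)
    (hηDd : ∀ r ∈ Set.Ico (0:ℝ) 1, what η r ≥ C * what η (1 - (1 - r) / K)) :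
    ∃ c : ℝ, 0 < c ∧ ∀ r : ℝ, 1 - 1 / K ≤ r → r < 1 →
      (∫ s in (0:ℝ)..r, η s / (what ω s) ^ p) ≥ c * what η r / (what ω r) ^ p :=
  stmt_10_general p hp ω η hωint hηint hωnn hηnn hωpos hηpos C₁ hC₁ hωDD K C hK hC hηDd
end
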